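/- Assume M(C_{λ,μ}) and M(C_{λ',μ'}) are irreducible Mathieu modules for U_q(sl(2,ℂ)). Then M(C_{λ,μ}) ≅ M(C_{λ',μ'}) as U_q(sl(2,ℂ))-modules if and only if there exists n ∈ ℤ such that λ' = λq^{2n} and μ' = μ − (q^{n}−q^{-n})(λq^{n-1}−λ^{-1}q^{1-n})/(q−q^{-1})^2. -/

import Mathlib

/-!
Common setup: the quantized universal enveloping algebra `U_q(sl(2,ℂ))`, defined as the
unital associative ℂ-algebra with generators `E, F, K, K⁻¹` and the relations
`K K⁻¹ = 1 = K⁻¹ K`, `K E K⁻¹ = q² E`, `K F K⁻¹ = q⁻² F`,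
`E F − F E = (K − K⁻¹)/(q − q⁻¹)`.
-/

noncomputable section

inductive QGen : Type
  | E | F | K | Kinv
  deriving DecidableEq

open FreeAlgebra in
inductive QRel (q : ℂ) : FreeAlgebra ℂ QGen → FreeAlgebra ℂ QGen → Prop
  | KKinv : QRel q (ι ℂ QGen.K * ι ℂ QGen.Kinv) 1
  | KinvK : QRel q (ι ℂ QGen.Kinv * ι ℂ QGen.K) 1
  | KE : QRel q (ι ℂ QGen.K * ι ℂ QGen.E) (q ^ 2 • (ι ℂ QGen.E * ι ℂ QGen.K))
  | KF : QRel q (ι ℂ QGen.K * ι ℂ QGen.F) ((q ^ 2)⁻¹ • (ι ℂ QGen.F * ι ℂ QGen.K))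
  | EF : QRel q (ι ℂ QGen.E * ι ℂ QGen.F - ι ℂ QGen.F * ι ℂ QGen.E)
      ((q - q⁻¹)⁻¹ • (ι ℂ QGen.K - ι ℂ QGen.Kinv))

/-- `U_q(sl(2,ℂ))`. -/
abbrev Uq (q : ℂ) : Type := RingQuot (QRel q)

/-- The generator `E`. -/
def Eg (q : ℂ) : Uq q := RingQuot.mkAlgHom ℂ (QRel q) (FreeAlgebra.ι ℂ QGen.E)

/-- The generator `F`. -/
def Fg (q : ℂ) : Uq q := RingQuot.mkAlgHom ℂ (QRel q) (FreeAlgebra.ι ℂ QGen.F)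

/-- The generator `K`. -/
def Kg (q : ℂ) : Uq q := RingQuot.mkAlgHom ℂ (QRel q) (FreeAlgebra.ι ℂ QGen.K)

/-- The generator `K⁻¹`. -/
def Kinvg (q : ℂ) : Uq q := RingQuot.mkAlgHom ℂ (QRel q) (FreeAlgebra.ι ℂ QGen.Kinv)

/-- `K^l` for an integer `l`. -/
def Kz (q : ℂ) (l : ℤ) : Uq q :=
  if 0 ≤ l then Kg q ^ l.toNat else Kinvg q ^ (-l).toNat

/-- `U_0`, the centralizer of `K` in `U_q(sl(2,ℂ))`. -/
def U0c (q : ℂ) : Subalgebra ℂ (Uq q) := Subalgebra.centralizer ℂ {Kg q}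

end

noncomputable section

/-- The data of the rank-1 Mathieu module `M(C_{λ,μ}) = U_q(sl(2,ℂ)) ⊗_{U_0} C_{λ,μ}`,
characterized by its universal property: `φ` is the character of `U_0` with `φ(K) = λ` and
`φ(EF) = μ`, the cyclic vector `m0 = 1 ⊗ 1` satisfies `z · m0 = φ(z) m0` for `z ∈ U_0`, and
for every `U_q(sl(2,ℂ))`-module `W` with a vector `w0` on which `U_0` acts through `φ`
there is a unique equivariant linear map `M → W` sending `m0` to `w0`. -/
def IsMathieuSl2 (q lam mu : ℂ) {M : Type} [AddCommGroup M] [Module ℂ M]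
    (π : Uq q →ₐ[ℂ] Module.End ℂ M) (m0 : M) (φ : U0c q →ₐ[ℂ] ℂ) : Prop :=
  (∀ h : Kg q ∈ U0c q, φ ⟨Kg q, h⟩ = lam) ∧
  (∀ h : Eg q * Fg q ∈ U0c q, φ ⟨Eg q * Fg q, h⟩ = mu) ∧
  (∀ z : U0c q, π (z : Uq q) m0 = φ z • m0) ∧
  ∀ (W : Type) [AddCommGroup W] [Module ℂ W],
    ∀ (πW : Uq q →ₐ[ℂ] Module.End ℂ W) (w0 : W),
      (∀ z : U0c q, πW (z : Uq q) w0 = φ z • w0) →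
      ∃! Ψ : M →ₗ[ℂ] W, (∀ (X : Uq q) (m : M), Ψ (π X m) = πW X (Ψ m)) ∧ Ψ m0 = w0

/-- The weight basis `{Eⁿ·1} ∪ {1} ∪ {Fⁿ·1}` of a Mathieu module, indexed by `ℤ`. -/
def bvec (q : ℂ) {M : Type} [AddCommGroup M] [Module ℂ M]
    (π : Uq q →ₐ[ℂ] Module.End ℂ M) (m0 : M) : ℤ → M := fun k =>
  if 0 ≤ k then π (Eg q ^ k.toNat) m0 else π (Fg q ^ (-k).toNat) m0

end

/-
An irreducible Mathieu module `M(C_{λ,μ})` is realised on `ℤ →₀ ℂ`: the basis vector `e_k`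
stands for `E^k·1` (`k ≥ 0`) or `F^{-k}·1` (`k < 0`), `K` acts on it by `λq^{2k}` and `EF` by
the scalar `t_k` appearing in the statement, which satisfies
`t_k - t_{k+1} = (λq^{2k} - λ⁻¹q^{-2k})/(q - q⁻¹)`. The universal property maps `M(C_{λ,μ})`
onto this model, and irreducibility makes the map injective.

Since `q` is not a root of unity, the `K`-weight spaces of the model are lines, so an
isomorphism `M(C_{λ',μ'}) ≅ M(C_{λ,μ})` sends `1` to a multiple of some `e_n`, which forces
`λ' = λq^{2n}` and `μ' = t_n`. Conversely, `U_0` acts on `e_n` through the character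
`K ↦ λq^{2n}`, `EF ↦ t_n`; this uses that `U_0` is generated by `EF, K^{±1}`, which follows from
the PBW spanning set `F^a K^i K^{-j} E^b`. Then `e_n` generates the irreducible model, and the
universal property of `M(C_{λ',μ'})` gives the isomorphism.
-/

noncomputable section

section QCommute

variable {R A : Type*} [Field R] [Ring A] [Algebra R A]

def QCommute (c : R) (g x : A) : Prop := g * x = c • (x * g)

namespace QCommute

variable {c d : R} {g x y : A}

theorem eq (h : QCommute c g x) : g * x = c • (x * g) := h

theorem of_commute (h : Commute g x) : QCommute (1 : R) g x := by
  rw [QCommute, one_smul]; exact h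

theorem mul_right (h : QCommute c g x) (h' : QCommute d g y) : QCommute (c * d) g (x * y) := by
  rw [QCommute, ← mul_assoc, h, smul_mul_assoc, mul_assoc, h', mul_smul_comm, smul_smul,
    mul_assoc]

theorem pow_right (h : QCommute c g x) (m : ℕ) : QCommute (c ^ m) g (x ^ m) := by
  induction m with
  | zero => simp [QCommute]
  | succ n ih => rw [pow_succ, pow_succ]; exact ih.mul_right h

theorem symm (hc : c ≠ 0) (h : QCommute c g x) : QCommute c⁻¹ x g := by
  rw [QCommute, h, smul_smul, inv_mul_cancel₀ hc, one_smul]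

theorem inv_left {v : A} (hgv : g * v = 1) (hvg : v * g = 1) (hc : c ≠ 0) (h : QCommute c g x) :
    QCommute c⁻¹ v x := by
  have : v * (g * x) * v = x * v := by rw [← mul_assoc, hvg, one_mul]
  rw [h, mul_smul_comm, smul_mul_assoc, mul_assoc, mul_assoc, hgv, mul_one] at this
  rw [QCommute, ← this, smul_smul, inv_mul_cancel₀ hc, one_smul]

end QCommute

end QCommute

theorem zpow_injective_of_not_root {q : ℂ} (hq : q ≠ 0) (hroot : ∀ m : ℕ, 0 < m → q ^ m ≠ 1) :
    Function.Injective fun n : ℤ => q ^ n := by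
  have : ¬IsOfFinOrder (Units.mk0 q hq) := by
    rw [isOfFinOrder_iff_pow_eq_one]
    rintro ⟨m, hm, h⟩
    exact hroot m hm (by simpa [Units.ext_iff] using h)
  intro m n h
  exact injective_zpow_iff_not_isOfFinOrder.mpr this (Units.ext (by simpa using h))

namespace Uq

variable {q : ℂ}

theorem K_mul_Kinv : Kg q * Kinvg q = 1 := by
  simpa [Kg, Kinvg] using RingQuot.mkAlgHom_rel ℂ (QRel.KKinv (q := q))

theorem Kinv_mul_K : Kinvg q * Kg q = 1 := by
  simpa [Kg, Kinvg] using RingQuot.mkAlgHom_rel ℂ (QRel.KinvK (q := q))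

theorem qCommute_K_E : QCommute (q ^ 2) (Kg q) (Eg q) := by
  simpa [QCommute, Kg, Eg] using RingQuot.mkAlgHom_rel ℂ (QRel.KE (q := q))

theorem qCommute_K_F : QCommute (q ^ 2)⁻¹ (Kg q) (Fg q) := by
  simpa [QCommute, Kg, Fg] using RingQuot.mkAlgHom_rel ℂ (QRel.KF (q := q))

theorem E_mul_F_sub_F_mul_E :
    Eg q * Fg q - Fg q * Eg q = (q - q⁻¹)⁻¹ • (Kg q - Kinvg q) := by
  simpa [Kg, Kinvg, Eg, Fg] using RingQuot.mkAlgHom_rel ℂ (QRel.EF (q := q))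

theorem commute_K_Kinv : Commute (Kg q) (Kinvg q) := K_mul_Kinv.trans Kinv_mul_K.symm

theorem qCommute_Kinv_E (hq : q ≠ 0) : QCommute (q ^ 2)⁻¹ (Kinvg q) (Eg q) :=
  qCommute_K_E.inv_left K_mul_Kinv Kinv_mul_K (pow_ne_zero 2 hq)

theorem qCommute_Kinv_F (hq : q ≠ 0) : QCommute (q ^ 2) (Kinvg q) (Fg q) := by
  simpa using qCommute_K_F.inv_left K_mul_Kinv Kinv_mul_K (inv_ne_zero (pow_ne_zero 2 hq))

theorem adjoin_generators_eq_top :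
    Algebra.adjoin ℂ {Eg q, Fg q, Kg q, Kinvg q} = ⊤ := by
  rw [eq_top_iff]
  rintro x -
  obtain ⟨y, rfl⟩ := RingQuot.mkAlgHom_surjective ℂ (QRel q) x
  have hy : RingQuot.mkAlgHom ℂ (QRel q) y ∈
      (Algebra.adjoin ℂ (Set.range (FreeAlgebra.ι ℂ))).map (RingQuot.mkAlgHom ℂ (QRel q)) :=
    ⟨y, by rw [FreeAlgebra.adjoin_range_ι]; trivial, rfl⟩
  rw [AlgHom.map_adjoin] at hy
  refine Algebra.adjoin_mono ?_ hy
  rintro _ ⟨_, ⟨g, rfl⟩, rfl⟩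
  cases g <;> simp [Eg, Fg, Kg, Kinvg]

theorem E_mul_F : Eg q * Fg q = Fg q * Eg q + (q - q⁻¹)⁻¹ • (Kg q - Kinvg q) := by
  rw [← E_mul_F_sub_F_mul_E, add_sub_cancel]

theorem E_mul_F_pow (hq : q ≠ 0) (a : ℕ) : ∃ x y : ℂ,
    Eg q * Fg q ^ (a + 1) =
      Fg q ^ (a + 1) * Eg q + x • (Fg q ^ a * Kg q) + y • (Fg q ^ a * Kinvg q) := by
  induction a with
  | zero => exact ⟨(q - q⁻¹)⁻¹, -(q - q⁻¹)⁻¹, by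
      rw [zero_add, pow_one, pow_zero, one_mul, one_mul, E_mul_F]; module⟩
  | succ n ih =>
    obtain ⟨x, y, ih⟩ := ih
    refine ⟨x * (q ^ 2)⁻¹ + (q - q⁻¹)⁻¹, y * q ^ 2 - (q - q⁻¹)⁻¹, ?_⟩
    rw [pow_succ _ (n + 1), ← mul_assoc, ih]
    simp only [add_mul, smul_mul_assoc, mul_assoc, qCommute_K_F.eq, (qCommute_Kinv_F hq).eq,
      E_mul_F, pow_succ, mul_add, mul_sub, mul_smul_comm, smul_smul, smul_sub]
    module

def pbwMonomial (q : ℂ) (a i j b : ℕ) : Uq q := Fg q ^ a * (Kg q ^ i * Kinvg q ^ j) * Eg q ^ b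

def pbwMonomials (q : ℂ) : Set (Uq q) := {x | ∃ a i j b, pbwMonomial q a i j b = x}

theorem pbwMonomial_mem_span (a i j b : ℕ) :
    pbwMonomial q a i j b ∈ Submodule.span ℂ (pbwMonomials q) :=
  Submodule.subset_span ⟨a, i, j, b, rfl⟩

theorem F_mul_pbwMonomial (a i j b : ℕ) :
    Fg q * pbwMonomial q a i j b = pbwMonomial q (a + 1) i j b := by
  simp only [pbwMonomial, pow_succ', mul_assoc]

theorem K_mul_pbwMonomial (a i j b : ℕ) :
    Kg q * pbwMonomial q a i j b = ((q ^ 2)⁻¹) ^ a • pbwMonomial q a (i + 1) j b := by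
  simp only [pbwMonomial, ← mul_assoc, (qCommute_K_F.pow_right a).eq, smul_mul_assoc]
  simp only [mul_assoc, pow_succ']

theorem Kinv_mul_pbwMonomial (hq : q ≠ 0) (a i j b : ℕ) :
    Kinvg q * pbwMonomial q a i j b = (q ^ 2) ^ a • pbwMonomial q a i (j + 1) b := by
  simp only [pbwMonomial, ← mul_assoc, ((qCommute_Kinv_F hq).pow_right a).eq, smul_mul_assoc]
  simp only [mul_assoc, (commute_K_Kinv.pow_left i).symm.left_comm, pow_succ']

theorem qCommute_E_K_pow_mul_Kinv_pow (hq : q ≠ 0) (i j : ℕ) :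
    QCommute (((q ^ 2)⁻¹) ^ i * (q ^ 2) ^ j) (Eg q) (Kg q ^ i * Kinvg q ^ j) := by
  have hEK : QCommute (q ^ 2)⁻¹ (Eg q) (Kg q) := qCommute_K_E.symm (pow_ne_zero 2 hq)
  have hEKinv : QCommute (q ^ 2) (Eg q) (Kinvg q) := by
    simpa using (qCommute_Kinv_E hq).symm (inv_ne_zero (pow_ne_zero 2 hq))
  exact (hEK.pow_right i).mul_right (hEKinv.pow_right j)

theorem E_mul_pbwMonomial_mem (hq : q ≠ 0) (a i j b : ℕ) :
    Eg q * pbwMonomial q a i j b ∈ Submodule.span ℂ (pbwMonomials q) := by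
  have hE : ∀ a, Fg q ^ a * (Eg q * (Kg q ^ i * Kinvg q ^ j) * Eg q ^ b) =
      (((q ^ 2)⁻¹) ^ i * (q ^ 2) ^ j) • pbwMonomial q a i j (b + 1) := by
    intro a
    rw [(qCommute_E_K_pow_mul_Kinv_pow hq i j).eq, pbwMonomial, pow_succ' (Eg q)]
    simp only [smul_mul_assoc, mul_smul_comm, mul_assoc]
  cases a with
  | zero =>
    have h0 := hE 0
    rw [pow_zero, one_mul] at h0
    rw [pbwMonomial, pow_zero, one_mul, ← mul_assoc, h0]
    exact Submodule.smul_mem _ _ (pbwMonomial_mem_span _ _ _ _)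
  | succ a =>
    obtain ⟨x, y, hxy⟩ := E_mul_F_pow hq a
    have hK : Fg q ^ a * Kg q * (Kg q ^ i * Kinvg q ^ j) * Eg q ^ b =
        pbwMonomial q a (i + 1) j b := by
      simp only [pbwMonomial, mul_assoc, pow_succ']
    have hKinv : Fg q ^ a * Kinvg q * (Kg q ^ i * Kinvg q ^ j) * Eg q ^ b =
        pbwMonomial q a i (j + 1) b := by
      simp only [pbwMonomial, mul_assoc, (commute_K_Kinv.pow_left i).symm.left_comm, pow_succ']
    have hexp : Eg q * pbwMonomial q (a + 1) i j b =
        Fg q ^ (a + 1) * (Eg q * (Kg q ^ i * Kinvg q ^ j) * Eg q ^ b) +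
          x • pbwMonomial q a (i + 1) j b + y • pbwMonomial q a i (j + 1) b := by
      rw [← hK, ← hKinv, pbwMonomial, ← mul_assoc, ← mul_assoc, hxy]
      simp only [add_mul, smul_mul_assoc, mul_assoc]
    rw [hexp, hE]
    exact add_mem (add_mem (Submodule.smul_mem _ _ (pbwMonomial_mem_span _ _ _ _))
      (Submodule.smul_mem _ _ (pbwMonomial_mem_span _ _ _ _)))
      (Submodule.smul_mem _ _ (pbwMonomial_mem_span _ _ _ _))

theorem span_pbwMonomials_eq_top (hq : q ≠ 0) : Submodule.span ℂ (pbwMonomials q) = ⊤ := by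
  set T := Submodule.span ℂ (pbwMonomials q)
  have hgen : ∀ g ∈ ({Eg q, Fg q, Kg q, Kinvg q} : Set (Uq q)),
      T ≤ T.comap (LinearMap.mulLeft ℂ g) := by
    intro g hg
    rw [Submodule.span_le]
    rintro _ ⟨a, i, j, b, rfl⟩
    simp only [Set.mem_insert_iff, Set.mem_singleton_iff] at hg
    rcases hg with rfl | rfl | rfl | rfl
    · exact E_mul_pbwMonomial_mem hq a i j b
    · show Fg q * _ ∈ T
      rw [F_mul_pbwMonomial]
      exact pbwMonomial_mem_span _ _ _ _
    · show Kg q * _ ∈ T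
      rw [K_mul_pbwMonomial]
      exact T.smul_mem _ (pbwMonomial_mem_span _ _ _ _)
    · show Kinvg q * _ ∈ T
      rw [Kinv_mul_pbwMonomial hq]
      exact T.smul_mem _ (pbwMonomial_mem_span _ _ _ _)
  have hmul : ∀ x : Uq q, ∀ y ∈ T, x * y ∈ T := by
    intro x
    have hx : x ∈ Algebra.adjoin ℂ {Eg q, Fg q, Kg q, Kinvg q} := by
      rw [adjoin_generators_eq_top]; trivial
    induction hx using Algebra.adjoin_induction with
    | mem g hg => exact fun y hy => hgen g hg hy
    | algebraMap r => exact fun y hy => by rw [← Algebra.smul_def]; exact T.smul_mem r hy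
    | add x x' _ _ hx hx' =>
      exact fun y hy => by rw [add_mul]; exact add_mem (hx y hy) (hx' y hy)
    | mul x x' _ _ hx hx' => exact fun y hy => by rw [mul_assoc]; exact hx _ (hx' y hy)
  have hone : (1 : Uq q) ∈ T := by
    simpa [pbwMonomial] using pbwMonomial_mem_span (q := q) 0 0 0 0
  exact eq_top_iff.mpr fun x _ => by simpa using hmul x 1 hone

def adjoinEFK (q : ℂ) : Subalgebra ℂ (Uq q) :=
  Algebra.adjoin ℂ {Eg q * Fg q, Kg q, Kinvg q}

theorem EF_mem_adjoinEFK : Eg q * Fg q ∈ adjoinEFK q := Algebra.subset_adjoin (by simp)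

theorem K_mem_adjoinEFK : Kg q ∈ adjoinEFK q := Algebra.subset_adjoin (by simp)

theorem Kinv_mem_adjoinEFK : Kinvg q ∈ adjoinEFK q := Algebra.subset_adjoin (by simp)

theorem FE_mem_adjoinEFK : Fg q * Eg q ∈ adjoinEFK q := by
  rw [eq_sub_of_add_eq E_mul_F.symm]
  exact sub_mem EF_mem_adjoinEFK
    (Subalgebra.smul_mem _ (sub_mem K_mem_adjoinEFK Kinv_mem_adjoinEFK) _)

theorem exists_F_mul_eq_mul_F (hq : q ≠ 0) {X : Uq q} (hX : X ∈ adjoinEFK q) :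
    ∃ Y ∈ adjoinEFK q, Fg q * X = Y * Fg q := by
  induction hX using Algebra.adjoin_induction with
  | mem g hg =>
    simp only [Set.mem_insert_iff, Set.mem_singleton_iff] at hg
    rcases hg with rfl | rfl | rfl
    · exact ⟨Fg q * Eg q, FE_mem_adjoinEFK, by simp only [mul_assoc]⟩
    · refine ⟨q ^ 2 • Kg q, Subalgebra.smul_mem _ K_mem_adjoinEFK _, ?_⟩
      simpa [smul_mul_assoc] using (qCommute_K_F.symm (inv_ne_zero (pow_ne_zero 2 hq))).eq
    · refine ⟨(q ^ 2)⁻¹ • Kinvg q, Subalgebra.smul_mem _ Kinv_mem_adjoinEFK _, ?_⟩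
      rw [smul_mul_assoc]
      exact ((qCommute_Kinv_F hq).symm (pow_ne_zero 2 hq)).eq
  | algebraMap r => exact ⟨algebraMap ℂ _ r, algebraMap_mem _ r, Algebra.commutes r _ |>.symm⟩
  | add X X' _ _ hX hX' =>
    obtain ⟨Y, hY, h⟩ := hX
    obtain ⟨Y', hY', h'⟩ := hX'
    exact ⟨Y + Y', add_mem hY hY', by rw [mul_add, h, h', add_mul]⟩
  | mul X X' _ _ hX hX' =>
    obtain ⟨Y, hY, h⟩ := hX
    obtain ⟨Y', hY', h'⟩ := hX'
    exact ⟨Y * Y', mul_mem hY hY', by rw [← mul_assoc, h, mul_assoc, h', mul_assoc]⟩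

theorem F_pow_mul_mul_E_pow_mem (hq : q ≠ 0) {X : Uq q} (hX : X ∈ adjoinEFK q) (a : ℕ) :
    Fg q ^ a * X * Eg q ^ a ∈ adjoinEFK q := by
  induction a with
  | zero => simpa using hX
  | succ a ih =>
    obtain ⟨Y, hY, h⟩ := exists_F_mul_eq_mul_F hq ih
    rw [pow_succ' (Fg q), pow_succ (Eg q)]
    have : Fg q * Fg q ^ a * X * (Eg q ^ a * Eg q) = Y * (Fg q * Eg q) := by
      rw [← mul_assoc Y, ← h]; simp only [mul_assoc]
    rw [this]
    exact mul_mem hY FE_mem_adjoinEFK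

theorem K_mem_U0c : Kg q ∈ U0c q :=
  (Subalgebra.mem_centralizer_iff ℂ).mpr fun g hg => by rw [Set.mem_singleton_iff.mp hg]

theorem adjoinEFK_le_U0c (hq : q ≠ 0) : adjoinEFK q ≤ U0c q := by
  refine Algebra.adjoin_le ?_
  simp only [Set.insert_subset_iff, Set.singleton_subset_iff, SetLike.mem_coe, U0c,
    Subalgebra.mem_centralizer_iff, Set.mem_singleton_iff, forall_eq]
  refine ⟨?_, trivial, K_mul_Kinv.trans Kinv_mul_K.symm⟩
  rw [← mul_assoc, qCommute_K_E.eq, smul_mul_assoc, mul_assoc, qCommute_K_F.eq, mul_smul_comm,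
    smul_smul, mul_inv_cancel₀ (pow_ne_zero 2 hq), one_smul, mul_assoc]

theorem EF_mem_U0c (hq : q ≠ 0) : Eg q * Fg q ∈ U0c q := adjoinEFK_le_U0c hq EF_mem_adjoinEFK

def conjK (q : ℂ) : Module.End ℂ (Uq q) :=
  LinearMap.mulLeft ℂ (Kg q) ∘ₗ LinearMap.mulRight ℂ (Kinvg q)

theorem conjK_apply_of_qCommute {c : ℂ} {x : Uq q} (h : QCommute c (Kg q) x) :
    conjK q x = c • x := by
  simp only [conjK, LinearMap.comp_apply, LinearMap.mulRight_apply, LinearMap.mulLeft_apply]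
  rw [← mul_assoc, h.eq, smul_mul_assoc, mul_assoc, K_mul_Kinv, mul_one]

theorem qCommute_K_pbwMonomial (hq : q ≠ 0) (a i j b : ℕ) :
    QCommute (q ^ (2 * ((b : ℤ) - a))) (Kg q) (pbwMonomial q a i j b) := by
  have h := (((qCommute_K_F (q := q)).pow_right a).mul_right
    (QCommute.of_commute (((Commute.refl _).pow_right i).mul_right
      (commute_K_Kinv.pow_right j)))).mul_right (qCommute_K_E.pow_right b)
  rw [pbwMonomial]
  convert h using 1
  rw [mul_one, mul_sub, zpow_sub₀ hq, zpow_mul, zpow_mul, zpow_natCast, zpow_natCast,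
    div_eq_inv_mul, ← inv_pow]
  norm_cast

-- Conjugation by `K` scales the PBW monomial `F^a K^i K^{-j} E^b` by `q^{2(b-a)}`, which is `1`
-- only for `a = b`. Eigenspaces for distinct eigenvalues being independent, an element of the
-- centralizer of `K` only involves the monomials with `a = b`, and these lie in `adjoinEFK`.
theorem U0c_le_adjoinEFK (hq : q ≠ 0) (hroot : ∀ m : ℕ, 0 < m → q ^ m ≠ 1) :
    U0c q ≤ adjoinEFK q := by
  intro u hu
  have hmono : ∀ x ∈ pbwMonomials q, x ∈ Subalgebra.toSubmodule (adjoinEFK q) ⊔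
      ⨆ (μ : ℂ) (_ : μ ≠ 1), (conjK q).eigenspace μ := by
    rintro _ ⟨a, i, j, b, rfl⟩
    rcases eq_or_ne a b with rfl | hab
    · refine Submodule.mem_sup_left (F_pow_mul_mul_E_pow_mem hq ?_ a)
      exact mul_mem (pow_mem K_mem_adjoinEFK i) (pow_mem Kinv_mem_adjoinEFK j)
    · refine Submodule.mem_sup_right
        (Submodule.mem_iSup_of_mem (q ^ (2 * ((b : ℤ) - a))) (Submodule.mem_iSup_of_mem ?_ ?_))
      · intro h
        have := zpow_injective_of_not_root hq hroot (h.trans (zpow_zero q).symm)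
        omega
      · exact Module.End.mem_eigenspace_iff.mpr
          (conjK_apply_of_qCommute (qCommute_K_pbwMonomial hq a i j b))
  have hu' : u ∈ Subalgebra.toSubmodule (adjoinEFK q) ⊔ _ :=
    (Submodule.span_le.mpr hmono) (span_pbwMonomials_eq_top hq ▸ Submodule.mem_top)
  obtain ⟨y, hy, z, hz, rfl⟩ := Submodule.mem_sup.mp hu'
  have hfix : ∀ x ∈ U0c q, x ∈ (conjK q).eigenspace 1 := fun x hx => by
    refine Module.End.mem_eigenspace_iff.mpr (conjK_apply_of_qCommute ?_)
    rw [QCommute, one_smul]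
    exact (Subalgebra.mem_centralizer_iff ℂ).mp hx _ rfl
  have hz1 : z ∈ (conjK q).eigenspace 1 := by
    simpa using sub_mem (hfix _ hu) (hfix _ (adjoinEFK_le_U0c hq hy))
  have hz0 : z = 0 := Submodule.disjoint_def.mp
    ((conjK q).eigenspaces_iSupIndep 1) z hz1 hz
  rwa [hz0, add_zero]

theorem Kinv_mem_U0c : Kinvg q ∈ U0c q :=
  (Subalgebra.mem_centralizer_iff ℂ).mpr fun g hg => by
    rw [Set.mem_singleton_iff.mp hg, K_mul_Kinv, Kinv_mul_K]

theorem apply_Kinv_eq_smul {W : Type*} [AddCommGroup W] [Module ℂ W]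
    (ρ : Uq q →ₐ[ℂ] Module.End ℂ W) (w : W) (φ : U0c q →ₐ[ℂ] ℂ)
    (hK : ρ (Kg q) w = φ ⟨Kg q, K_mem_U0c⟩ • w) :
    ρ (Kinvg q) w = φ ⟨Kinvg q, Kinv_mem_U0c⟩ • w := by
  have hφ : φ ⟨Kinvg q, Kinv_mem_U0c⟩ * φ ⟨Kg q, K_mem_U0c⟩ = 1 := by
    rw [← map_mul, ← map_one φ]; congr 1; exact Subtype.ext Kinv_mul_K
  calc ρ (Kinvg q) w
      = (φ ⟨Kinvg q, Kinv_mem_U0c⟩ * φ ⟨Kg q, K_mem_U0c⟩) • ρ (Kinvg q) w := by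
        rw [hφ, one_smul]
    _ = φ ⟨Kinvg q, Kinv_mem_U0c⟩ • ρ (Kinvg q * Kg q) w := by
        rw [mul_smul, map_mul, Module.End.mul_apply, hK, map_smul]
    _ = φ ⟨Kinvg q, Kinv_mem_U0c⟩ • w := by rw [Kinv_mul_K, map_one, Module.End.one_apply]

theorem apply_eq_smul_of_U0c_generators (hq : q ≠ 0) (hroot : ∀ m : ℕ, 0 < m → q ^ m ≠ 1)
    {W : Type*} [AddCommGroup W] [Module ℂ W] (ρ : Uq q →ₐ[ℂ] Module.End ℂ W) (w : W)
    (φ : U0c q →ₐ[ℂ] ℂ) (hK : ρ (Kg q) w = φ ⟨Kg q, K_mem_U0c⟩ • w)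
    (hEF : ρ (Eg q * Fg q) w = φ ⟨Eg q * Fg q, EF_mem_U0c hq⟩ • w) (z : U0c q) :
    ρ z w = φ z • w := by
  have hKinv := apply_Kinv_eq_smul ρ w φ hK
  obtain ⟨z, hz⟩ := z
  have hz' := U0c_le_adjoinEFK hq hroot hz
  revert hz
  induction hz' using Algebra.adjoin_induction with
  | mem g hg =>
    simp only [Set.mem_insert_iff, Set.mem_singleton_iff] at hg
    rcases hg with rfl | rfl | rfl <;> intro _ <;> assumption
  | algebraMap r =>
    intro hr
    rw [AlgHom.commutes, Module.algebraMap_end_apply]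
    exact (congrArg (· • w) (φ.commutes r)).symm
  | add x y hx hy ihx ihy =>
    intro _
    rw [map_add, LinearMap.add_apply, ihx (adjoinEFK_le_U0c hq hx),
      ihy (adjoinEFK_le_U0c hq hy), ← add_smul, ← map_add]
    rfl
  | mul x y hx hy ihx ihy =>
    intro _
    rw [map_mul, Module.End.mul_apply, ihy (adjoinEFK_le_U0c hq hy), map_smul,
      ihx (adjoinEFK_le_U0c hq hx), smul_smul, mul_comm, ← map_mul]
    rfl

end Uq

section WeightedShift

variable {R : Type*} [CommSemiring R]

def weightedShift (c : ℤ → R) (j : ℤ) : Module.End R (ℤ →₀ R) :=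
  Finsupp.lsum R fun k => c k • Finsupp.lsingle (k + j)

@[simp]
theorem weightedShift_single (c : ℤ → R) (j k : ℤ) (m : R) :
    weightedShift c j (Finsupp.single k m) = c k • Finsupp.single (k + j) m := by
  rw [weightedShift, Finsupp.lsum_single, LinearMap.smul_apply, Finsupp.lsingle_apply]

theorem weightedShift_zero_apply (c : ℤ → R) (v : ℤ →₀ R) (k : ℤ) :
    weightedShift c 0 v k = c k * v k := by
  induction v using Finsupp.induction_linear with
  | zero => simp
  | add f g hf hg => rw [map_add, Finsupp.add_apply, hf, hg, Finsupp.add_apply, mul_add]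
  | single a b =>
    rw [weightedShift_single, add_zero, Finsupp.smul_apply, Finsupp.single_apply, smul_eq_mul]
    split_ifs with h <;> simp [h]

end WeightedShift

namespace MathieuModel

def efEigenvalue (q lam mu : ℂ) (n : ℤ) : ℂ :=
  mu - (q ^ n - q ^ (-n)) * (lam * q ^ (n - 1) - lam⁻¹ * q ^ (1 - n)) / (q - q⁻¹) ^ 2

theorem efEigenvalue_zero (q lam mu : ℂ) : efEigenvalue q lam mu 0 = mu := by
  simp [efEigenvalue]

theorem efEigenvalue_sub_efEigenvalue_add_one {q lam : ℂ} (hq : q ≠ 0) (hlam : lam ≠ 0)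
    (mu : ℂ) (k : ℤ) :
    efEigenvalue q lam mu k - efEigenvalue q lam mu (k + 1) =
      (q - q⁻¹)⁻¹ * (lam * q ^ (2 * k) - (lam * q ^ (2 * k))⁻¹) := by
  rcases eq_or_ne (q - q⁻¹) 0 with hqq | hqq
  · simp [efEigenvalue, hqq]
  have hq' : q ^ 2 - 1 ≠ 0 := by
    contrapose! hqq; field_simp; linear_combination hqq
  have ha : q ^ k ≠ 0 := zpow_ne_zero _ hq
  simp only [efEigenvalue, zpow_add_one₀ hq, zpow_sub₀ hq, zpow_neg, zpow_one, two_mul,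
    zpow_add₀ hq, show 1 - (k + 1) = -k by ring, add_sub_cancel_right, mul_inv]
  field_simp
  ring

-- For `k < 0`, `E e_k = EF e_{k+1} = t_{k+1} e_{k+1}`; for `k > 0`, `F e_k = t_k e_{k-1}` is
-- forced by `EF e_k = t_k e_k`.
def coeffE (q lam mu : ℂ) (k : ℤ) : ℂ := if 0 ≤ k then 1 else efEigenvalue q lam mu (k + 1)

def coeffF (q lam mu : ℂ) (k : ℤ) : ℂ := if k ≤ 0 then 1 else efEigenvalue q lam mu k

theorem coeffE_sub_one_mul_coeffF (q lam mu : ℂ) (k : ℤ) :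
    coeffE q lam mu (k - 1) * coeffF q lam mu k = efEigenvalue q lam mu k := by
  unfold coeffE coeffF
  split_ifs <;> first | omega | simp

def weightK (q lam : ℂ) (k : ℤ) : ℂ := lam * q ^ (2 * k)

def genAction (q lam mu : ℂ) : QGen → Module.End ℂ (ℤ →₀ ℂ)
  | .E => weightedShift (coeffE q lam mu) 1
  | .F => weightedShift (coeffF q lam mu) (-1)
  | .K => weightedShift (weightK q lam) 0
  | .Kinv => weightedShift (fun k => (weightK q lam k)⁻¹) 0

end MathieuModel

open MathieuModel

def mathieuModel {q lam : ℂ} (hq : q ≠ 0) (hlam : lam ≠ 0) (mu : ℂ) :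
    Uq q →ₐ[ℂ] Module.End ℂ (ℤ →₀ ℂ) :=
  RingQuot.liftAlgHom ℂ ⟨FreeAlgebra.lift ℂ (genAction q lam mu), by
    have hw : ∀ k, weightK q lam k ≠ 0 := fun k => mul_ne_zero hlam (zpow_ne_zero _ hq)
    rintro x y (_ | _ | _ | _ | _) <;>
      simp only [map_mul, map_one, map_smul, map_sub, FreeAlgebra.lift_ι_apply] <;>
      refine Finsupp.lhom_ext fun k m => ?_ <;>
      simp only [Module.End.mul_apply, Module.End.one_apply, LinearMap.smul_apply,
        LinearMap.sub_apply, genAction, weightedShift_single, map_smul, smul_smul, add_zero]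
    · rw [inv_mul_cancel₀ (hw k), one_smul]
    · rw [mul_inv_cancel₀ (hw k), one_smul]
    · congr 1
      simp only [weightK, mul_add, zpow_add₀ hq, mul_one, zpow_ofNat]
      ring
    · congr 1
      simp only [weightK, mul_add, zpow_add₀ hq, mul_neg, mul_one, zpow_neg, zpow_ofNat]
      field_simp
    · have h := coeffE_sub_one_mul_coeffF q lam mu (k + 1)
      rw [add_sub_cancel_right] at h
      rw [neg_add_cancel_right, add_neg_cancel_right, ← sub_smul, ← sub_eq_add_neg,
        mul_comm (coeffF q lam mu k), coeffE_sub_one_mul_coeffF, h, ← sub_smul, smul_smul,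
        efEigenvalue_sub_efEigenvalue_add_one hq hlam]
      rfl⟩

section

variable {q lam : ℂ} (hq : q ≠ 0) (hlam : lam ≠ 0) (mu : ℂ)

theorem mathieuModel_generator (g : QGen) :
    mathieuModel hq hlam mu (RingQuot.mkAlgHom ℂ (QRel q) (FreeAlgebra.ι ℂ g)) =
      genAction q lam mu g := by
  rw [mathieuModel, RingQuot.liftAlgHom_mkAlgHom_apply, FreeAlgebra.lift_ι_apply]

theorem mathieuModel_E_single (k : ℤ) (m : ℂ) :
    mathieuModel hq hlam mu (Eg q) (Finsupp.single k m) =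
      coeffE q lam mu k • Finsupp.single (k + 1) m := by
  rw [Eg, mathieuModel_generator, genAction, weightedShift_single]

theorem mathieuModel_F_single (k : ℤ) (m : ℂ) :
    mathieuModel hq hlam mu (Fg q) (Finsupp.single k m) =
      coeffF q lam mu k • Finsupp.single (k - 1) m := by
  rw [Fg, mathieuModel_generator, genAction, weightedShift_single, sub_eq_add_neg]

theorem mathieuModel_K_apply (v : ℤ →₀ ℂ) (k : ℤ) :
    mathieuModel hq hlam mu (Kg q) v k = lam * q ^ (2 * k) * v k := by
  rw [Kg, mathieuModel_generator, genAction, weightedShift_zero_apply, weightK]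

theorem mathieuModel_K_single (k : ℤ) (m : ℂ) :
    mathieuModel hq hlam mu (Kg q) (Finsupp.single k m) =
      (lam * q ^ (2 * k)) • Finsupp.single k m := by
  rw [Kg, mathieuModel_generator, genAction, weightedShift_single, add_zero, weightK]

theorem mathieuModel_EF_single (k : ℤ) (m : ℂ) :
    mathieuModel hq hlam mu (Eg q * Fg q) (Finsupp.single k m) =
      efEigenvalue q lam mu k • Finsupp.single k m := by
  rw [map_mul, Module.End.mul_apply, mathieuModel_F_single, map_smul, mathieuModel_E_single,
    smul_smul, sub_add_cancel, mul_comm, coeffE_sub_one_mul_coeffF]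

theorem mathieuModel_eq_top_of_single_zero_mem {P : Submodule ℂ (ℤ →₀ ℂ)}
    (hP : ∀ X : Uq q, ∀ v ∈ P, mathieuModel hq hlam mu X v ∈ P)
    (h0 : Finsupp.single 0 1 ∈ P) : P = ⊤ := by
  have hsingle : ∀ k : ℤ, Finsupp.single k 1 ∈ P := by
    intro k
    induction k using Int.induction_on with
    | zero => exact h0
    | succ i ih =>
      simpa [mathieuModel_E_single, coeffE] using hP (Eg q) _ ih
    | pred i ih =>
      have hi : -(i : ℤ) ≤ 0 := by omega
      simpa [mathieuModel_F_single, coeffF, hi] using hP (Fg q) _ ih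
  rw [eq_top_iff, ← Finsupp.basisSingleOne.span_eq, Submodule.span_le]
  rintro _ ⟨k, rfl⟩
  simpa using hsingle k

theorem mathieuModel_eq_single_of_K_eigenvector (hroot : ∀ m : ℕ, 0 < m → q ^ m ≠ 1)
    {c : ℂ} {v : ℤ →₀ ℂ} (hv : mathieuModel hq hlam mu (Kg q) v = c • v) (hv0 : v ≠ 0) :
    ∃ n : ℤ, c = lam * q ^ (2 * n) ∧ v = Finsupp.single n (v n) := by
  have hweight : ∀ k, lam * q ^ (2 * k) * v k = c * v k := fun k => by
    rw [← mathieuModel_K_apply hq hlam mu, hv, Finsupp.smul_apply, smul_eq_mul]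
  obtain ⟨n, hn⟩ := Finsupp.ne_iff.mp hv0
  have hc : c = lam * q ^ (2 * n) := (mul_right_cancel₀ hn (hweight n)).symm
  refine ⟨n, hc, Finsupp.ext fun k => ?_⟩
  rcases eq_or_ne k n with rfl | hkn
  · rw [Finsupp.single_eq_same]
  rw [Finsupp.single_eq_of_ne hkn]
  by_contra hk
  have : q ^ (2 * k) = q ^ (2 * n) :=
    mul_left_cancel₀ hlam (mul_right_cancel₀ hk ((hweight k).trans (by rw [hc])))
  exact hkn (by simpa using zpow_injective_of_not_root hq hroot this)

theorem mathieuModel_exists_of_eigenvector (hroot : ∀ m : ℕ, 0 < m → q ^ m ≠ 1)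
    {c d : ℂ} {v : ℤ →₀ ℂ} (hK : mathieuModel hq hlam mu (Kg q) v = c • v)
    (hEF : mathieuModel hq hlam mu (Eg q * Fg q) v = d • v) (hv0 : v ≠ 0) :
    ∃ n : ℤ, c = lam * q ^ (2 * n) ∧ d = efEigenvalue q lam mu n := by
  obtain ⟨n, hn, hvn⟩ := mathieuModel_eq_single_of_K_eigenvector hq hlam mu hroot hK hv0
  refine ⟨n, hn, smul_left_injective ℂ hv0 ?_⟩
  dsimp only
  rw [← hEF, hvn, mathieuModel_EF_single]

theorem mathieuModel_apply_single_eq_smul (hroot : ∀ m : ℕ, 0 < m → q ^ m ≠ 1) {n : ℤ}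
    (ψ : U0c q →ₐ[ℂ] ℂ) (hK : ψ ⟨Kg q, Uq.K_mem_U0c⟩ = lam * q ^ (2 * n))
    (hEF : ψ ⟨Eg q * Fg q, Uq.EF_mem_U0c hq⟩ = efEigenvalue q lam mu n) (z : U0c q) :
    mathieuModel hq hlam mu z (Finsupp.single n 1) = ψ z • Finsupp.single n 1 :=
  Uq.apply_eq_smul_of_U0c_generators hq hroot _ _ ψ
    (by rw [mathieuModel_K_single, hK]) (by rw [mathieuModel_EF_single, hEF]) z

end

section Intertwining

variable {R ι M N : Type*} [Semiring R] [AddCommMonoid M] [Module R M] [AddCommMonoid N]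
  [Module R N] {ρ : ι → Module.End R M} {σ : ι → Module.End R N}

theorem LinearEquiv.symm_intertwines (e : M ≃ₗ[R] N) (he : ∀ X m, e (ρ X m) = σ X (e m))
    (X : ι) (n : N) : e.symm (σ X n) = ρ X (e.symm n) :=
  e.injective (by rw [he, e.apply_symm_apply, e.apply_symm_apply])

theorem LinearEquiv.irreducible_of_intertwines (e : M ≃ₗ[R] N)
    (he : ∀ X m, e (ρ X m) = σ X (e m))
    (hirr : ∀ P : Submodule R M, (∀ X, ∀ m ∈ P, ρ X m ∈ P) → P = ⊥ ∨ P = ⊤) :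
    ∀ P : Submodule R N, (∀ X, ∀ n ∈ P, σ X n ∈ P) → P = ⊥ ∨ P = ⊤ := by
  intro P hP
  have hcomap : ∀ X, ∀ m ∈ P.comap (e : M →ₗ[R] N), ρ X m ∈ P.comap (e : M →ₗ[R] N) :=
    fun X m hm => by simpa [he] using hP X _ hm
  have hmap : (P.comap (e : M →ₗ[R] N)).map (e : M →ₗ[R] N) = P :=
    Submodule.map_comap_eq_self (by simp)
  rcases hirr _ hcomap with h | h
  · left; rw [← hmap, h, Submodule.map_bot]
  · right; rw [← hmap, h, Submodule.map_top, LinearEquiv.range]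

theorem eq_top_of_irreducible_of_mem
    (hirr : ∀ P : Submodule R M, (∀ X, ∀ m ∈ P, ρ X m ∈ P) → P = ⊥ ∨ P = ⊤)
    {P : Submodule R M} (hP : ∀ X, ∀ m ∈ P, ρ X m ∈ P) {v : M} (hv : v ∈ P) (hv0 : v ≠ 0) :
    P = ⊤ :=
  (hirr P hP).resolve_left fun hbot => hv0 (by rwa [hbot, Submodule.mem_bot] at hv)

end Intertwining

section Mathieu

variable {q lam mu : ℂ} {M : Type} [AddCommGroup M] [Module ℂ M]
  {π : Uq q →ₐ[ℂ] Module.End ℂ M} {m0 : M} {φ : U0c q →ₐ[ℂ] ℂ}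

theorem IsMathieuSl2.ne_zero [Nontrivial M] (hM : IsMathieuSl2 q lam mu π m0 φ) : m0 ≠ 0 := by
  intro h0
  obtain ⟨_, -, huniq⟩ := hM.2.2.2 M π m0 hM.2.2.1
  have hid := huniq LinearMap.id ⟨fun _ _ => rfl, rfl⟩
  have hzero := huniq 0 ⟨fun _ _ => by simp, by simp [h0]⟩
  obtain ⟨m, hm⟩ := exists_ne (0 : M)
  exact hm (LinearMap.congr_fun (hid.trans hzero.symm) m)

theorem IsMathieuSl2.exists_linearEquiv {W : Type} [AddCommGroup W] [Module ℂ W]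
    (hM : IsMathieuSl2 q lam mu π m0 φ)
    (hirr : ∀ P : Submodule ℂ M, (∀ X : Uq q, ∀ m ∈ P, π X m ∈ P) → P = ⊥ ∨ P = ⊤)
    (ρ : Uq q →ₐ[ℂ] Module.End ℂ W) {w : W} (hw : w ≠ 0) (hφ : ∀ z : U0c q, ρ z w = φ z • w)
    (hcyclic : ∀ P : Submodule ℂ W, (∀ X : Uq q, ∀ v ∈ P, ρ X v ∈ P) → w ∈ P → P = ⊤) :
    ∃ e : M ≃ₗ[ℂ] W, ∀ (X : Uq q) (m : M), e (π X m) = ρ X (e m) := by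
  obtain ⟨Ψ, ⟨hΨ, hΨm0⟩, -⟩ := hM.2.2.2 W ρ w hφ
  have hinj : LinearMap.ker Ψ = ⊥ := by
    refine (hirr _ fun X m hm => ?_).resolve_right fun htop => hw ?_
    · rw [LinearMap.mem_ker, hΨ, LinearMap.mem_ker.mp hm, map_zero]
    · rw [← hΨm0, ← LinearMap.mem_ker, htop]; trivial
  have hsurj : LinearMap.range Ψ = ⊤ := by
    refine hcyclic _ ?_ ⟨m0, hΨm0⟩
    rintro X _ ⟨m, rfl⟩
    exact ⟨π X m, hΨ X m⟩
  exact ⟨.ofBijective Ψ ⟨LinearMap.ker_eq_bot.mp hinj, LinearMap.range_eq_top.mp hsurj⟩, hΨ⟩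

theorem IsMathieuSl2.exists_linearEquiv_mathieuModel (hq : q ≠ 0)
    (hroot : ∀ m : ℕ, 0 < m → q ^ m ≠ 1) (hlam : lam ≠ 0) (hM : IsMathieuSl2 q lam mu π m0 φ)
    (hirr : ∀ P : Submodule ℂ M, (∀ X : Uq q, ∀ m ∈ P, π X m ∈ P) → P = ⊥ ∨ P = ⊤) :
    ∃ e : M ≃ₗ[ℂ] ℤ →₀ ℂ, ∀ (X : Uq q) (m : M), e (π X m) = mathieuModel hq hlam mu X (e m) :=
  hM.exists_linearEquiv hirr _ (Finsupp.single_ne_zero.mpr one_ne_zero)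
    (mathieuModel_apply_single_eq_smul hq hlam mu hroot φ
      (by simpa using hM.1 _) (by simpa [efEigenvalue_zero] using hM.2.1 _))
    fun _ hP h0 => mathieuModel_eq_top_of_single_zero_mem hq hlam mu hP h0

end Mathieu

end

theorem stmt18_general (q : ℂ) (hq : q ≠ 0) (hroot : ∀ m : ℕ, 0 < m → q ^ m ≠ 1)
    (lam mu lam' mu' : ℂ) (hlam : lam ≠ 0)
    {M M' : Type} [AddCommGroup M] [Module ℂ M] [AddCommGroup M'] [Module ℂ M']
    (π : Uq q →ₐ[ℂ] Module.End ℂ M) (m0 : M) (φ : U0c q →ₐ[ℂ] ℂ)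
    (hM : IsMathieuSl2 q lam mu π m0 φ)
    (π' : Uq q →ₐ[ℂ] Module.End ℂ M') (m0' : M') (φ' : U0c q →ₐ[ℂ] ℂ)
    (hM' : IsMathieuSl2 q lam' mu' π' m0' φ')
    (hirr : ∀ P : Submodule ℂ M, (∀ X : Uq q, ∀ m ∈ P, π X m ∈ P) → P = ⊥ ∨ P = ⊤)
    (hirr' : ∀ P : Submodule ℂ M', (∀ X : Uq q, ∀ m ∈ P, π' X m ∈ P) → P = ⊥ ∨ P = ⊤) :
    (∃ e : M ≃ₗ[ℂ] M', ∀ (X : Uq q) (m : M), e (π X m) = π' X (e m)) ↔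
      ∃ n : ℤ, lam' = lam * q ^ (2 * n) ∧
        mu' = mu - (q ^ n - q ^ (-n)) *
            (lam * q ^ (n - 1) - lam⁻¹ * q ^ (1 - n)) / (q - q⁻¹) ^ 2 := by
  obtain ⟨Ψ, hΨ⟩ := hM.exists_linearEquiv_mathieuModel hq hroot hlam hirr
  constructor
  · rintro ⟨e, he⟩
    have : Nontrivial M' := (Ψ.symm.trans e).injective.nontrivial
    set v := Ψ (e.symm m0')
    have hv : ∀ z : U0c q, mathieuModel hq hlam mu z v = φ' z • v := fun z => by
      rw [← hΨ, ← e.symm_intertwines he, hM'.2.2.1, map_smul, map_smul]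
    exact mathieuModel_exists_of_eigenvector hq hlam mu hroot
      (by rw [hv ⟨_, Uq.K_mem_U0c⟩, hM'.1]) (by rw [hv ⟨_, Uq.EF_mem_U0c hq⟩, hM'.2.1])
      (by simpa [v] using hM'.ne_zero)
  · rintro ⟨n, hlam', hmu'⟩
    have hn : Finsupp.single n (1 : ℂ) ≠ 0 := Finsupp.single_ne_zero.mpr one_ne_zero
    obtain ⟨Θ, hΘ⟩ := hM'.exists_linearEquiv hirr' (mathieuModel hq hlam mu) hn
      (mathieuModel_apply_single_eq_smul hq hlam mu hroot φ' (hM'.1 _ ▸ hlam')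
        (hM'.2.1 _ ▸ hmu'))
      fun _ hP hnP =>
        eq_top_of_irreducible_of_mem (Ψ.irreducible_of_intertwines hΨ hirr) hP hnP hn
    exact ⟨Ψ.trans Θ.symm, fun X m => by
      rw [LinearEquiv.trans_apply, LinearEquiv.trans_apply, hΨ, Θ.symm_intertwines hΘ]⟩

/-- Two irreducible Mathieu modules `M(C_{λ,μ})`, `M(C_{λ',μ'})` for
`U_q(sl(2,ℂ))` are isomorphic as `U_q(sl(2,ℂ))`-modules if and only if there exists
`n ∈ ℤ` with `λ' = λq^{2n}` and
`μ' = μ − (qⁿ−q⁻ⁿ)(λq^{n-1}−λ⁻¹q^{1-n})/(q−q⁻¹)²`. -/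
theorem stmt18 (q : ℂ) (hq : q ≠ 0) (hroot : ∀ m : ℕ, 0 < m → q ^ m ≠ 1)
    (lam mu lam' mu' : ℂ) (hlam : lam ≠ 0) (hlam' : lam' ≠ 0)
    {M M' : Type} [AddCommGroup M] [Module ℂ M] [AddCommGroup M'] [Module ℂ M']
    (π : Uq q →ₐ[ℂ] Module.End ℂ M) (m0 : M) (φ : U0c q →ₐ[ℂ] ℂ)
    (hM : IsMathieuSl2 q lam mu π m0 φ)
    (π' : Uq q →ₐ[ℂ] Module.End ℂ M') (m0' : M') (φ' : U0c q →ₐ[ℂ] ℂ)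
    (hM' : IsMathieuSl2 q lam' mu' π' m0' φ')
    (hirr : ∀ P : Submodule ℂ M, (∀ X : Uq q, ∀ m ∈ P, π X m ∈ P) → P = ⊥ ∨ P = ⊤)
    (hirr' : ∀ P : Submodule ℂ M', (∀ X : Uq q, ∀ m ∈ P, π' X m ∈ P) → P = ⊥ ∨ P = ⊤) :
    (∃ e : M ≃ₗ[ℂ] M', ∀ (X : Uq q) (m : M), e (π X m) = π' X (e m)) ↔
      ∃ n : ℤ, lam' = lam * q ^ (2 * n) ∧
        mu' = mu - (q ^ n - q ^ (-n)) *
            (lam * q ^ (n - 1) - lam⁻¹ * q ^ (1 - n)) / (q - q⁻¹) ^ 2 :=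
  stmt18_general q hq hroot lam mu lam' mu' hlam π m0 φ hM π' m0' φ' hM' hirr hirr'
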